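/- Let λ > -1/2 be a real number with λ ≠ 0. For every integer k ≥ 1, ∑_{j=1}^{k} (2j+λ-2)·Γ(2j+2λ-2)/Γ(2j-1) = Γ(2k+2λ)/(2(2λ+1)·Γ(2k-1)). -/

import Mathlib

/-!
The right-hand side telescopes. Writing `F k` for it, two applications of
`Γ(s + 1) = s Γ(s)` give `F (k + 1) - F k = Γ(2k + 2λ) / Γ(2k + 1) · c / (2(2λ + 1))` with
`c = (2k + 2λ + 1)(2k + 2λ) - 2k(2k - 1) = 2(2λ + 1)(2k + λ)`, which is the
`(k + 1)`-st summand; the case `k = 1` is the same computation with `Γ(1) = 1`.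
-/

open Real

lemma Real.Gamma_add_two {s : ℝ} (hs : s ≠ 0) (hs1 : s + 1 ≠ 0) :
    Gamma (s + 2) = (s + 1) * s * Gamma s := by
  rw [show s + 2 = s + 1 + 1 by ring, Gamma_add_one hs1, Gamma_add_one hs, mul_assoc]

/-- The summand `α̃_j²` of the paper, as a function of a real `x = j`. -/
noncomputable def alphaTildeSq (lam x : ℝ) : ℝ :=
  (2 * x + lam - 2) * Gamma (2 * x + 2 * lam - 2) / Gamma (2 * x - 1)

noncomputable def alphaTildeSqSum (lam x : ℝ) : ℝ :=
  Gamma (2 * x + 2 * lam) / (2 * (2 * lam + 1) * Gamma (2 * x - 1))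

lemma alphaTildeSqSum_one {lam : ℝ} (h0 : 2 * lam ≠ 0) (h1 : 2 * lam + 1 ≠ 0) :
    alphaTildeSqSum lam 1 = alphaTildeSq lam 1 := by
  unfold alphaTildeSqSum alphaTildeSq
  rw [show 2 * (1 : ℝ) + 2 * lam - 2 = 2 * lam by ring,
    show 2 * (1 : ℝ) + 2 * lam = 2 * lam + 2 by ring, Gamma_add_two h0 h1,
    show 2 * (1 : ℝ) - 1 = 1 by ring, Gamma_one]
  field_simp
  ring

lemma alphaTildeSqSum_add_one {lam x : ℝ} (hx : 1 / 2 < x) (h1 : 2 * lam + 1 ≠ 0)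
    (hx0 : 2 * x + 2 * lam ≠ 0) (hx1 : 2 * x + 2 * lam + 1 ≠ 0) :
    alphaTildeSqSum lam (x + 1) = alphaTildeSqSum lam x + alphaTildeSq lam (x + 1) := by
  unfold alphaTildeSqSum alphaTildeSq
  have hΓ : Gamma (2 * x - 1) ≠ 0 := (Gamma_pos_of_pos (by linarith)).ne'
  rw [show 2 * (x + 1) + 2 * lam - 2 = 2 * x + 2 * lam by ring,
    show 2 * (x + 1) + 2 * lam = 2 * x + 2 * lam + 2 by ring, Gamma_add_two hx0 hx1,
    show 2 * (x + 1) - 1 = 2 * x - 1 + 2 by ring,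
    Gamma_add_two (by linarith) (by linarith)]
  have : 2 * x - 1 + 1 ≠ 0 := by linarith
  have : 2 * x - 1 ≠ 0 := by linarith
  field_simp
  ring

/-- Lemma 2.2 (i): `∑_{j=1}^k α̃_j² = Γ(2k+2λ)/(2(2λ+1)Γ(2k-1))`. -/
theorem sum_alphat_sq (lam : ℝ) (hlam : lam > -1/2) (hlam0 : lam ≠ 0) (k : ℕ) (hk : 1 ≤ k) :
    ∑ j ∈ Finset.Icc 1 k,
        (2*(j : ℝ) + lam - 2) * Real.Gamma (2*(j : ℝ) + 2*lam - 2) / Real.Gamma (2*(j : ℝ) - 1)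
      = Real.Gamma (2*(k : ℝ) + 2*lam) / (2*(2*lam + 1) * Real.Gamma (2*(k : ℝ) - 1)) := by
  change ∑ j ∈ Finset.Icc 1 k, alphaTildeSq lam j = alphaTildeSqSum lam k
  have h1 : 2 * lam + 1 ≠ 0 := by linarith
  induction k, hk using Nat.le_induction with
  | base => simpa using (alphaTildeSqSum_one (by simpa using hlam0) h1).symm
  | succ k hk ih =>
    have hk1 : (1 : ℝ) ≤ k := by exact_mod_cast hk
    rw [Finset.sum_Icc_succ_top (by omega), ih, Nat.cast_succ,
      alphaTildeSqSum_add_one (by linarith) h1 (by linarith) (by linarith)]
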